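/- For all ξ = (ξ₁,ξ₂,ξ₃,ξ₄) ∈ ℝ⁴, with ξ_avg = (ξ₁+ξ₂+ξ₃+ξ₄)/4 and Δ̃⁴ξ² := Δ⁴ξ² − 2·ξ_avg·Δ⁴ξ, the following hold: (i) Δ̃⁴ξ² = ((ξ₁−ξ₃)² − (ξ₂−ξ₄)²)/2; (ii) |Δ⁴ξ| ≤ δξ^med; (iii) |Δ̃⁴ξ²| ≤ δξ^hi · δξ^med. -/
import Mathlib


/-- With `ξ_avg = (ξ₁+ξ₂+ξ₃+ξ₄)/4` and `Δ̃⁴ξ² = Δ⁴ξ² − 2·ξ_avg·Δ⁴ξ`: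
(i) `Δ̃⁴ξ² = ((ξ₁−ξ₃)² − (ξ₂−ξ₄)²)/2`;
(ii) `|Δ⁴ξ| ≤ δξ^med`;
(iii) `|Δ̃⁴ξ²| ≤ δξ^hi · δξ^med`. -/
theorem tilde_delta_identities (ξ1 ξ2 ξ3 ξ4 : ℝ) :
    (ξ1 ^ 2 - ξ2 ^ 2 + ξ3 ^ 2 - ξ4 ^ 2)
        - 2 * ((ξ1 + ξ2 + ξ3 + ξ4) / 4) * (ξ1 - ξ2 + ξ3 - ξ4)
      = ((ξ1 - ξ3) ^ 2 - (ξ2 - ξ4) ^ 2) / 2 ∧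
    |ξ1 - ξ2 + ξ3 - ξ4| ≤ min (|ξ1 - ξ2| + |ξ3 - ξ4|) (|ξ1 - ξ4| + |ξ3 - ξ2|) ∧
    |(ξ1 ^ 2 - ξ2 ^ 2 + ξ3 ^ 2 - ξ4 ^ 2)
        - 2 * ((ξ1 + ξ2 + ξ3 + ξ4) / 4) * (ξ1 - ξ2 + ξ3 - ξ4)|
      ≤ max (|ξ1 - ξ2| + |ξ3 - ξ4|) (|ξ1 - ξ4| + |ξ3 - ξ2|) *
          min (|ξ1 - ξ2| + |ξ3 - ξ4|) (|ξ1 - ξ4| + |ξ3 - ξ2|) := by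
  have hi : (ξ1 ^ 2 - ξ2 ^ 2 + ξ3 ^ 2 - ξ4 ^ 2)
      - 2 * ((ξ1 + ξ2 + ξ3 + ξ4) / 4) * (ξ1 - ξ2 + ξ3 - ξ4)
      = ((ξ1 - ξ3) ^ 2 - (ξ2 - ξ4) ^ 2) / 2 := by ring
  refine ⟨hi, ?_, ?_⟩
  · apply le_min
    · calc |ξ1 - ξ2 + ξ3 - ξ4| = |(ξ1 - ξ2) + (ξ3 - ξ4)| := by ring_nf
        _ ≤ |ξ1 - ξ2| + |ξ3 - ξ4| := abs_add_le _ _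
    · calc |ξ1 - ξ2 + ξ3 - ξ4| = |(ξ1 - ξ4) + (ξ3 - ξ2)| := by ring_nf
        _ ≤ |ξ1 - ξ4| + |ξ3 - ξ2| := abs_add_le _ _
  · rw [hi]
    set p := |ξ1 - ξ2| + |ξ3 - ξ4| with hp
    set q := |ξ1 - ξ4| + |ξ3 - ξ2| with hq
    have hA : |(ξ1 - ξ4) - (ξ3 - ξ2)| ≤ q := abs_sub _ _
    have hB : |(ξ1 - ξ2) - (ξ3 - ξ4)| ≤ p := abs_sub _ _
    have key : |((ξ1 - ξ3) ^ 2 - (ξ2 - ξ4) ^ 2) / 2| ≤ q * p := by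
      have : ((ξ1 - ξ3) ^ 2 - (ξ2 - ξ4) ^ 2) / 2
          = ((ξ1 - ξ4) - (ξ3 - ξ2)) * ((ξ1 - ξ2) - (ξ3 - ξ4)) / 2 := by ring
      rw [this, abs_div, abs_mul]
      have h2 : |(2 : ℝ)| = 2 := by norm_num
      rw [h2]
      have hAnn : (0:ℝ) ≤ |(ξ1 - ξ4) - (ξ3 - ξ2)| := abs_nonneg _
      have hBnn : (0:ℝ) ≤ |(ξ1 - ξ2) - (ξ3 - ξ4)| := abs_nonneg _
      nlinarith [mul_le_mul hA hB hBnn (le_trans hAnn hA)]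
    have hqp : q * p = max p q * min p q := by
      rcases le_total p q with h | h
      · rw [max_eq_right h, min_eq_left h]
      · rw [max_eq_left h, min_eq_right h]; ring
    linarith [key, hqp ▸ key]
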